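/- arXiv:math/9808036 — 4 statements merged into one kernel-verified Lean document; each statement's English description precedes it below -/
import Mathlib

section
/- Let ω = Σ_{p,q=1}^n a_{pq} dx^p ⊗ dx^q be a smooth two-tensor on U. Then for all smooth vector fields X₁, X₂, X₃ on U, dω(X₁⊗X₂⊗X₃) = Σ_{i,ℓ,j=1}^n (∂a_{ℓj}/∂x^i − ∂a_{ij}/∂x^ℓ + ∂a_{iℓ}/∂x^j) X₁^i X₂^ℓ X₃^j + Σ_{i,ℓ,j=1}^n (a_{ℓj} + a_{jℓ}) X₁^i X₂^ℓ · ∂X₃^j/∂x^i. -/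
open scoped BigOperators

/-- Action of a vector field on a function: `X(f)(z) = Df_z(X(z))`. -/
noncomputable def vfApply {n : ℕ} (f : (Fin n → ℝ) → ℝ)
    (X : (Fin n → ℝ) → (Fin n → ℝ)) : (Fin n → ℝ) → ℝ :=
  fun z => fderiv ℝ f z (X z)

/-- Lie bracket of vector fields: `[X,Y](z) = DY_z(X(z)) − DX_z(Y(z))`. -/
noncomputable def vfBracket {n : ℕ} (X Y : (Fin n → ℝ) → (Fin n → ℝ)) :
    (Fin n → ℝ) → (Fin n → ℝ) :=
  fun z => fderiv ℝ Y z (X z) - fderiv ℝ X z (Y z)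

/-- A two-tensor `ω = Σ a_{pq} dx^p ⊗ dx^q` applied to two vector fields:
`ω(X⊗Y)(z) = Σ_{p,q} a_{pq}(z) X^p(z) Y^q(z)`. -/
noncomputable def tens2 {n : ℕ} (a : Fin n → Fin n → (Fin n → ℝ) → ℝ)
    (X Y : (Fin n → ℝ) → (Fin n → ℝ)) : (Fin n → ℝ) → ℝ :=
  fun z => ∑ p, ∑ q, a p q z * X z p * Y z q

/-- Leibniz coboundary of a two-tensor:
`dω(X₁⊗X₂⊗X₃) = X₁(ω(X₂⊗X₃)) − X₂(ω(X₁⊗X₃)) + X₃(ω(X₁⊗X₂))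
  − ω([X₁,X₂]⊗X₃) + ω([X₁,X₃]⊗X₂) + ω(X₁⊗[X₂,X₃])`. -/
noncomputable def d2 {n : ℕ} (a : Fin n → Fin n → (Fin n → ℝ) → ℝ)
    (X₁ X₂ X₃ : (Fin n → ℝ) → (Fin n → ℝ)) : (Fin n → ℝ) → ℝ :=
  fun z =>
    vfApply (tens2 a X₂ X₃) X₁ z - vfApply (tens2 a X₁ X₃) X₂ z
      + vfApply (tens2 a X₁ X₂) X₃ z
      - tens2 a (vfBracket X₁ X₂) X₃ z + tens2 a (vfBracket X₁ X₃) X₂ z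
      + tens2 a X₁ (vfBracket X₂ X₃) z

/- ### auxiliary lemmas -/

lemma clm_apply_sum' {n : ℕ} (L : (Fin n → ℝ) →L[ℝ] ℝ) (v : Fin n → ℝ) :
    L v = ∑ i, v i * L (Pi.single i 1) := by
  have hv : v = ∑ i, v i • (Pi.single i 1 : Fin n → ℝ) := by
    ext j; simp [Pi.single_apply]
  conv_lhs => rw [hv]
  rw [map_sum]; simp [smul_eq_mul]

lemma fderiv_comp_apply' {n : ℕ} (X : (Fin n → ℝ) → (Fin n → ℝ)) (z v : Fin n → ℝ) (p : Fin n)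
    (hX : DifferentiableAt ℝ X z) :
    fderiv ℝ (fun w => X w p) z v = fderiv ℝ X z v p := by
  have h : (fun w => X w p)
      = (ContinuousLinearMap.proj (R := ℝ) (φ := fun _ : Fin n => ℝ) p) ∘ X := rfl
  rw [h, fderiv_comp z (ContinuousLinearMap.differentiableAt _) hX]
  simp [ContinuousLinearMap.fderiv]

lemma fderiv_triple_mul {n : ℕ} (f g h : (Fin n → ℝ) → ℝ) (z v : Fin n → ℝ)
    (hf : DifferentiableAt ℝ f z) (hg : DifferentiableAt ℝ g z) (hh : DifferentiableAt ℝ h z) :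
    fderiv ℝ (fun w => f w * g w * h w) z v =
      fderiv ℝ f z v * g z * h z + f z * fderiv ℝ g z v * h z + f z * g z * fderiv ℝ h z v := by
  rw [fderiv_fun_mul (show DifferentiableAt ℝ (fun w => f w * g w) z from hf.mul hg) hh, fderiv_fun_mul hf hg]
  simp [smul_eq_mul]; ring

lemma fderiv_tens2_apply {n : ℕ} (a : Fin n → Fin n → (Fin n → ℝ) → ℝ)
    (X Y : (Fin n → ℝ) → (Fin n → ℝ)) (z v : Fin n → ℝ)
    (hda : ∀ p q, DifferentiableAt ℝ (a p q) z)
    (hX : ∀ p, DifferentiableAt ℝ (fun w => X w p) z)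
    (hY : ∀ q, DifferentiableAt ℝ (fun w => Y w q) z) :
    fderiv ℝ (tens2 a X Y) z v =
      ∑ p, ∑ q, (fderiv ℝ (a p q) z v * X z p * Y z q
        + a p q z * fderiv ℝ (fun w => X w p) z v * Y z q
        + a p q z * X z p * fderiv ℝ (fun w => Y w q) z v) := by
  have hdiff : ∀ p q : Fin n, DifferentiableAt ℝ (fun w => a p q w * X w p * Y w q) z :=
    fun p q => ((hda p q).mul (hX p)).mul (hY q)
  have h1 : tens2 a X Y = fun w => ∑ p, ∑ q, a p q w * X w p * Y w q := rfl
  rw [h1, fderiv_fun_sum (fun p _ => DifferentiableAt.fun_sum (fun q _ => hdiff p q))]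
  rw [ContinuousLinearMap.sum_apply]
  refine Finset.sum_congr rfl (fun p _ => ?_)
  rw [fderiv_fun_sum (fun q _ => hdiff p q), ContinuousLinearMap.sum_apply]
  exact Finset.sum_congr rfl (fun q _ =>
    fderiv_triple_mul _ _ _ z v (hda p q) (hX p) (hY q))

lemma sum3_swap12 {n : ℕ} (f : Fin n → Fin n → Fin n → ℝ) :
    ∑ i, ∑ ℓ, ∑ j, f i ℓ j = ∑ i, ∑ ℓ, ∑ j, f ℓ i j :=
  Finset.sum_comm

lemma sum3_swap23 {n : ℕ} (f : Fin n → Fin n → Fin n → ℝ) :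
    ∑ i, ∑ ℓ, ∑ j, f i ℓ j = ∑ i, ∑ ℓ, ∑ j, f i j ℓ :=
  Finset.sum_congr rfl fun _ _ => Finset.sum_comm

lemma sum3_cycle {n : ℕ} (f : Fin n → Fin n → Fin n → ℝ) :
    ∑ i, ∑ ℓ, ∑ j, f i ℓ j = ∑ i, ∑ ℓ, ∑ j, f j i ℓ := by
  rw [sum3_swap12 f]; exact sum3_swap23 fun i ℓ j => f ℓ i j

lemma sum3_cycle' {n : ℕ} (f : Fin n → Fin n → Fin n → ℝ) :
    ∑ i, ∑ ℓ, ∑ j, f i ℓ j = ∑ i, ∑ ℓ, ∑ j, f ℓ j i := by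
  rw [sum3_swap23 f]; exact sum3_swap12 fun i ℓ j => f i j ℓ

/-- local formula for the Leibniz coboundary of a smooth two-tensor
`ω = Σ a_{pq} dx^p ⊗ dx^q` on `U`:
`dω(X₁⊗X₂⊗X₃) = Σ_{i,ℓ,j} (∂a_{ℓj}/∂xⁱ − ∂a_{ij}/∂xˡ + ∂a_{iℓ}/∂xʲ) X₁ⁱ X₂ˡ X₃ʲ
  + Σ_{i,ℓ,j} (a_{ℓj} + a_{jℓ}) X₁ⁱ X₂ˡ ∂X₃ʲ/∂xⁱ`. -/
theorem leibnizD_two_tensor_local_formula (n : ℕ) (hn : 1 ≤ n)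
    (U : Set (Fin n → ℝ)) (hU : IsOpen U) (hUne : U.Nonempty)
    (a : Fin n → Fin n → (Fin n → ℝ) → ℝ)
    (ha : ∀ p q, ContDiffOn ℝ (⊤ : ℕ∞) (a p q) U)
    (X₁ X₂ X₃ : (Fin n → ℝ) → (Fin n → ℝ))
    (hX₁ : ContDiffOn ℝ (⊤ : ℕ∞) X₁ U) (hX₂ : ContDiffOn ℝ (⊤ : ℕ∞) X₂ U)
    (hX₃ : ContDiffOn ℝ (⊤ : ℕ∞) X₃ U) :
    ∀ z ∈ U,
      d2 a X₁ X₂ X₃ z =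
        (∑ i, ∑ ℓ, ∑ j,
          (fderiv ℝ (a ℓ j) z (Pi.single i 1) - fderiv ℝ (a i j) z (Pi.single ℓ 1)
            + fderiv ℝ (a i ℓ) z (Pi.single j 1)) * X₁ z i * X₂ z ℓ * X₃ z j)
        + ∑ i, ∑ ℓ, ∑ j,
            (a ℓ j z + a j ℓ z) * X₁ z i * X₂ z ℓ *
              fderiv ℝ (fun w => X₃ w j) z (Pi.single i 1) := by
  intro z hz
  have hzU : U ∈ nhds z := hU.mem_nhds hz
  have hda : ∀ p q, DifferentiableAt ℝ (a p q) z :=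
    fun p q => ((ha p q).contDiffAt hzU).differentiableAt (by simp)
  have hd1 : DifferentiableAt ℝ X₁ z := (hX₁.contDiffAt hzU).differentiableAt (by simp)
  have hd2 : DifferentiableAt ℝ X₂ z := (hX₂.contDiffAt hzU).differentiableAt (by simp)
  have hd3 : DifferentiableAt ℝ X₃ z := (hX₃.contDiffAt hzU).differentiableAt (by simp)
  have hc1 : ∀ p, DifferentiableAt ℝ (fun w => X₁ w p) z := fun p =>
    (ContinuousLinearMap.differentiableAt
      (ContinuousLinearMap.proj (R := ℝ) (φ := fun _ : Fin n => ℝ) p)).comp z hd1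
  have hc2 : ∀ p, DifferentiableAt ℝ (fun w => X₂ w p) z := fun p =>
    (ContinuousLinearMap.differentiableAt
      (ContinuousLinearMap.proj (R := ℝ) (φ := fun _ : Fin n => ℝ) p)).comp z hd2
  have hc3 : ∀ p, DifferentiableAt ℝ (fun w => X₃ w p) z := fun p =>
    (ContinuousLinearMap.differentiableAt
      (ContinuousLinearMap.proj (R := ℝ) (φ := fun _ : Fin n => ℝ) p)).comp z hd3
  -- brackets componentwise
  have hbr : ∀ (X Y : (Fin n → ℝ) → (Fin n → ℝ)), DifferentiableAt ℝ X z →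
      DifferentiableAt ℝ Y z → ∀ ℓ, vfBracket X Y z ℓ =
      ∑ i, (X z i * fderiv ℝ (fun w => Y w ℓ) z (Pi.single i 1)
        - Y z i * fderiv ℝ (fun w => X w ℓ) z (Pi.single i 1)) := by
    intro X Y hX hY ℓ
    show fderiv ℝ Y z (X z) ℓ - fderiv ℝ X z (Y z) ℓ = _
    rw [← fderiv_comp_apply' Y z _ ℓ hY, ← fderiv_comp_apply' X z _ ℓ hX,
      clm_apply_sum', clm_apply_sum', ← Finset.sum_sub_distrib]
  -- T1
  have hT1 : vfApply (tens2 a X₂ X₃) X₁ z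
      = ∑ i, ∑ ℓ, ∑ j, X₁ z i *
          (fderiv ℝ (a ℓ j) z (Pi.single i 1) * X₂ z ℓ * X₃ z j
           + a ℓ j z * fderiv ℝ (fun w => X₂ w ℓ) z (Pi.single i 1) * X₃ z j
           + a ℓ j z * X₂ z ℓ * fderiv ℝ (fun w => X₃ w j) z (Pi.single i 1)) := by
    show fderiv ℝ (tens2 a X₂ X₃) z (X₁ z) = _
    rw [clm_apply_sum']
    refine Finset.sum_congr rfl fun i _ => ?_
    rw [fderiv_tens2_apply a X₂ X₃ z _ hda hc2 hc3, Finset.mul_sum]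
    exact Finset.sum_congr rfl fun ℓ _ => by rw [Finset.mul_sum]
  -- T2 (natural order: outer ℓ)
  have hT2' : vfApply (tens2 a X₁ X₃) X₂ z
      = ∑ ℓ, ∑ i, ∑ j, X₂ z ℓ *
          (fderiv ℝ (a i j) z (Pi.single ℓ 1) * X₁ z i * X₃ z j
           + a i j z * fderiv ℝ (fun w => X₁ w i) z (Pi.single ℓ 1) * X₃ z j
           + a i j z * X₁ z i * fderiv ℝ (fun w => X₃ w j) z (Pi.single ℓ 1)) := by
    show fderiv ℝ (tens2 a X₁ X₃) z (X₂ z) = _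
    rw [clm_apply_sum']
    refine Finset.sum_congr rfl fun ℓ _ => ?_
    rw [fderiv_tens2_apply a X₁ X₃ z _ hda hc1 hc3, Finset.mul_sum]
    exact Finset.sum_congr rfl fun i _ => by rw [Finset.mul_sum]
  have hT2 : vfApply (tens2 a X₁ X₃) X₂ z
      = ∑ i, ∑ ℓ, ∑ j, X₂ z ℓ *
          (fderiv ℝ (a i j) z (Pi.single ℓ 1) * X₁ z i * X₃ z j
           + a i j z * fderiv ℝ (fun w => X₁ w i) z (Pi.single ℓ 1) * X₃ z j
           + a i j z * X₁ z i * fderiv ℝ (fun w => X₃ w j) z (Pi.single ℓ 1)) := by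
    rw [hT2']; exact sum3_swap12 _
  -- T3 (natural order: outer j)
  have hT3' : vfApply (tens2 a X₁ X₂) X₃ z
      = ∑ j, ∑ i, ∑ ℓ, X₃ z j *
          (fderiv ℝ (a i ℓ) z (Pi.single j 1) * X₁ z i * X₂ z ℓ
           + a i ℓ z * fderiv ℝ (fun w => X₁ w i) z (Pi.single j 1) * X₂ z ℓ
           + a i ℓ z * X₁ z i * fderiv ℝ (fun w => X₂ w ℓ) z (Pi.single j 1)) := by
    show fderiv ℝ (tens2 a X₁ X₂) z (X₃ z) = _
    rw [clm_apply_sum']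
    refine Finset.sum_congr rfl fun j _ => ?_
    rw [fderiv_tens2_apply a X₁ X₂ z _ hda hc1 hc2, Finset.mul_sum]
    exact Finset.sum_congr rfl fun i _ => by rw [Finset.mul_sum]
  have hT3 : vfApply (tens2 a X₁ X₂) X₃ z
      = ∑ i, ∑ ℓ, ∑ j, X₃ z j *
          (fderiv ℝ (a i ℓ) z (Pi.single j 1) * X₁ z i * X₂ z ℓ
           + a i ℓ z * fderiv ℝ (fun w => X₁ w i) z (Pi.single j 1) * X₂ z ℓ
           + a i ℓ z * X₁ z i * fderiv ℝ (fun w => X₂ w ℓ) z (Pi.single j 1)) := by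
    rw [hT3']; exact sum3_cycle _
  -- B12 (natural order ℓ, j, i)
  have hB12' : tens2 a (vfBracket X₁ X₂) X₃ z
      = ∑ ℓ, ∑ j, ∑ i, a ℓ j z * X₃ z j *
          (X₁ z i * fderiv ℝ (fun w => X₂ w ℓ) z (Pi.single i 1)
           - X₂ z i * fderiv ℝ (fun w => X₁ w ℓ) z (Pi.single i 1)) := by
    show (∑ ℓ, ∑ j, a ℓ j z * vfBracket X₁ X₂ z ℓ * X₃ z j) = _
    refine Finset.sum_congr rfl fun ℓ _ => Finset.sum_congr rfl fun j _ => ?_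
    rw [hbr X₁ X₂ hd1 hd2 ℓ, Finset.mul_sum, Finset.sum_mul]
    exact Finset.sum_congr rfl fun i _ => by ring
  have hB12 : tens2 a (vfBracket X₁ X₂) X₃ z
      = ∑ i, ∑ ℓ, ∑ j, a ℓ j z * X₃ z j *
          (X₁ z i * fderiv ℝ (fun w => X₂ w ℓ) z (Pi.single i 1)
           - X₂ z i * fderiv ℝ (fun w => X₁ w ℓ) z (Pi.single i 1)) := by
    rw [hB12']; exact sum3_cycle' _
  -- B13
  have hB13' : tens2 a (vfBracket X₁ X₃) X₂ z
      = ∑ ℓ, ∑ j, ∑ i, a ℓ j z * X₂ z j *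
          (X₁ z i * fderiv ℝ (fun w => X₃ w ℓ) z (Pi.single i 1)
           - X₃ z i * fderiv ℝ (fun w => X₁ w ℓ) z (Pi.single i 1)) := by
    show (∑ ℓ, ∑ j, a ℓ j z * vfBracket X₁ X₃ z ℓ * X₂ z j) = _
    refine Finset.sum_congr rfl fun ℓ _ => Finset.sum_congr rfl fun j _ => ?_
    rw [hbr X₁ X₃ hd1 hd3 ℓ, Finset.mul_sum, Finset.sum_mul]
    exact Finset.sum_congr rfl fun i _ => by ring
  have hB13 : tens2 a (vfBracket X₁ X₃) X₂ z
      = ∑ i, ∑ ℓ, ∑ j, a ℓ j z * X₂ z j *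
          (X₁ z i * fderiv ℝ (fun w => X₃ w ℓ) z (Pi.single i 1)
           - X₃ z i * fderiv ℝ (fun w => X₁ w ℓ) z (Pi.single i 1)) := by
    rw [hB13']; exact sum3_cycle' _
  -- B23 (natural order i, j, ℓ)
  have hB23' : tens2 a X₁ (vfBracket X₂ X₃) z
      = ∑ i, ∑ j, ∑ ℓ, a i j z * X₁ z i *
          (X₂ z ℓ * fderiv ℝ (fun w => X₃ w j) z (Pi.single ℓ 1)
           - X₃ z ℓ * fderiv ℝ (fun w => X₂ w j) z (Pi.single ℓ 1)) := by
    show (∑ i, ∑ j, a i j z * X₁ z i * vfBracket X₂ X₃ z j) = _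
    refine Finset.sum_congr rfl fun i _ => Finset.sum_congr rfl fun j _ => ?_
    rw [hbr X₂ X₃ hd2 hd3 j, Finset.mul_sum]
  have hB23 : tens2 a X₁ (vfBracket X₂ X₃) z
      = ∑ i, ∑ ℓ, ∑ j, a i j z * X₁ z i *
          (X₂ z ℓ * fderiv ℝ (fun w => X₃ w j) z (Pi.single ℓ 1)
           - X₃ z ℓ * fderiv ℝ (fun w => X₂ w j) z (Pi.single ℓ 1)) := by
    rw [hB23']
    exact Finset.sum_congr rfl fun i _ => Finset.sum_comm
  -- combine
  have key : d2 a X₁ X₂ X₃ z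
      = ∑ i, ∑ ℓ, ∑ j,
        (X₁ z i *
          (fderiv ℝ (a ℓ j) z (Pi.single i 1) * X₂ z ℓ * X₃ z j
           + a ℓ j z * fderiv ℝ (fun w => X₂ w ℓ) z (Pi.single i 1) * X₃ z j
           + a ℓ j z * X₂ z ℓ * fderiv ℝ (fun w => X₃ w j) z (Pi.single i 1))
        - X₂ z ℓ *
          (fderiv ℝ (a i j) z (Pi.single ℓ 1) * X₁ z i * X₃ z j
           + a i j z * fderiv ℝ (fun w => X₁ w i) z (Pi.single ℓ 1) * X₃ z j
           + a i j z * X₁ z i * fderiv ℝ (fun w => X₃ w j) z (Pi.single ℓ 1))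
        + X₃ z j *
          (fderiv ℝ (a i ℓ) z (Pi.single j 1) * X₁ z i * X₂ z ℓ
           + a i ℓ z * fderiv ℝ (fun w => X₁ w i) z (Pi.single j 1) * X₂ z ℓ
           + a i ℓ z * X₁ z i * fderiv ℝ (fun w => X₂ w ℓ) z (Pi.single j 1))
        - a ℓ j z * X₃ z j *
          (X₁ z i * fderiv ℝ (fun w => X₂ w ℓ) z (Pi.single i 1)
           - X₂ z i * fderiv ℝ (fun w => X₁ w ℓ) z (Pi.single i 1))
        + a ℓ j z * X₂ z j *
          (X₁ z i * fderiv ℝ (fun w => X₃ w ℓ) z (Pi.single i 1)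
           - X₃ z i * fderiv ℝ (fun w => X₁ w ℓ) z (Pi.single i 1))
        + a i j z * X₁ z i *
          (X₂ z ℓ * fderiv ℝ (fun w => X₃ w j) z (Pi.single ℓ 1)
           - X₃ z ℓ * fderiv ℝ (fun w => X₂ w j) z (Pi.single ℓ 1))) := by
    show vfApply (tens2 a X₂ X₃) X₁ z - vfApply (tens2 a X₁ X₃) X₂ z
      + vfApply (tens2 a X₁ X₂) X₃ z
      - tens2 a (vfBracket X₁ X₂) X₃ z + tens2 a (vfBracket X₁ X₃) X₂ z
      + tens2 a X₁ (vfBracket X₂ X₃) z = _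
    rw [hT1, hT2, hT3, hB12, hB13, hB23]
    simp only [← Finset.sum_add_distrib, ← Finset.sum_sub_distrib]
  rw [key]
  -- pointwise split of the integrand
  have split : ∀ i ℓ j : Fin n,
      (X₁ z i *
          (fderiv ℝ (a ℓ j) z (Pi.single i 1) * X₂ z ℓ * X₃ z j
           + a ℓ j z * fderiv ℝ (fun w => X₂ w ℓ) z (Pi.single i 1) * X₃ z j
           + a ℓ j z * X₂ z ℓ * fderiv ℝ (fun w => X₃ w j) z (Pi.single i 1))
        - X₂ z ℓ *
          (fderiv ℝ (a i j) z (Pi.single ℓ 1) * X₁ z i * X₃ z j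
           + a i j z * fderiv ℝ (fun w => X₁ w i) z (Pi.single ℓ 1) * X₃ z j
           + a i j z * X₁ z i * fderiv ℝ (fun w => X₃ w j) z (Pi.single ℓ 1))
        + X₃ z j *
          (fderiv ℝ (a i ℓ) z (Pi.single j 1) * X₁ z i * X₂ z ℓ
           + a i ℓ z * fderiv ℝ (fun w => X₁ w i) z (Pi.single j 1) * X₂ z ℓ
           + a i ℓ z * X₁ z i * fderiv ℝ (fun w => X₂ w ℓ) z (Pi.single j 1))
        - a ℓ j z * X₃ z j *
          (X₁ z i * fderiv ℝ (fun w => X₂ w ℓ) z (Pi.single i 1)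
           - X₂ z i * fderiv ℝ (fun w => X₁ w ℓ) z (Pi.single i 1))
        + a ℓ j z * X₂ z j *
          (X₁ z i * fderiv ℝ (fun w => X₃ w ℓ) z (Pi.single i 1)
           - X₃ z i * fderiv ℝ (fun w => X₁ w ℓ) z (Pi.single i 1))
        + a i j z * X₁ z i *
          (X₂ z ℓ * fderiv ℝ (fun w => X₃ w j) z (Pi.single ℓ 1)
           - X₃ z ℓ * fderiv ℝ (fun w => X₂ w j) z (Pi.single ℓ 1)))
      =
      ((fderiv ℝ (a ℓ j) z (Pi.single i 1) - fderiv ℝ (a i j) z (Pi.single ℓ 1)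
          + fderiv ℝ (a i ℓ) z (Pi.single j 1)) * X₁ z i * X₂ z ℓ * X₃ z j)
      + ((a ℓ j z + a j ℓ z) * X₁ z i * X₂ z ℓ *
          fderiv ℝ (fun w => X₃ w j) z (Pi.single i 1))
      + (a ℓ j z * X₃ z j * X₂ z i * fderiv ℝ (fun w => X₁ w ℓ) z (Pi.single i 1)
         - a i j z * X₃ z j * X₂ z ℓ * fderiv ℝ (fun w => X₁ w i) z (Pi.single ℓ 1))
      + (a i ℓ z * X₃ z j * fderiv ℝ (fun w => X₁ w i) z (Pi.single j 1) * X₂ z ℓ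
         - a ℓ j z * X₃ z i * fderiv ℝ (fun w => X₁ w ℓ) z (Pi.single i 1) * X₂ z j)
      + (a i ℓ z * X₁ z i * X₃ z j * fderiv ℝ (fun w => X₂ w ℓ) z (Pi.single j 1)
         - a i j z * X₁ z i * X₃ z ℓ * fderiv ℝ (fun w => X₂ w j) z (Pi.single ℓ 1))
      + (a ℓ j z * X₂ z j * X₁ z i * fderiv ℝ (fun w => X₃ w ℓ) z (Pi.single i 1)
         - a j ℓ z * X₂ z ℓ * X₁ z i * fderiv ℝ (fun w => X₃ w j) z (Pi.single i 1)) := by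
    intro i ℓ j; ring
  calc
    _ = ∑ i, ∑ ℓ, ∑ j,
        (((fderiv ℝ (a ℓ j) z (Pi.single i 1) - fderiv ℝ (a i j) z (Pi.single ℓ 1)
            + fderiv ℝ (a i ℓ) z (Pi.single j 1)) * X₁ z i * X₂ z ℓ * X₃ z j)
        + ((a ℓ j z + a j ℓ z) * X₁ z i * X₂ z ℓ *
            fderiv ℝ (fun w => X₃ w j) z (Pi.single i 1))
        + (a ℓ j z * X₃ z j * X₂ z i * fderiv ℝ (fun w => X₁ w ℓ) z (Pi.single i 1)
           - a i j z * X₃ z j * X₂ z ℓ * fderiv ℝ (fun w => X₁ w i) z (Pi.single ℓ 1))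
        + (a i ℓ z * X₃ z j * fderiv ℝ (fun w => X₁ w i) z (Pi.single j 1) * X₂ z ℓ
           - a ℓ j z * X₃ z i * fderiv ℝ (fun w => X₁ w ℓ) z (Pi.single i 1) * X₂ z j)
        + (a i ℓ z * X₁ z i * X₃ z j * fderiv ℝ (fun w => X₂ w ℓ) z (Pi.single j 1)
           - a i j z * X₁ z i * X₃ z ℓ * fderiv ℝ (fun w => X₂ w j) z (Pi.single ℓ 1))
        + (a ℓ j z * X₂ z j * X₁ z i * fderiv ℝ (fun w => X₃ w ℓ) z (Pi.single i 1)
           - a j ℓ z * X₂ z ℓ * X₁ z i * fderiv ℝ (fun w => X₃ w j) z (Pi.single i 1))) := by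
      exact Finset.sum_congr rfl fun i _ => Finset.sum_congr rfl fun ℓ _ =>
        Finset.sum_congr rfl fun j _ => split i ℓ j
    _ = _ := by
      simp only [Finset.sum_add_distrib, Finset.sum_sub_distrib]
      have hP1 : (∑ i : Fin n, ∑ ℓ : Fin n, ∑ j : Fin n,
          a ℓ j z * X₃ z j * X₂ z i * fderiv ℝ (fun w => X₁ w ℓ) z (Pi.single i 1))
          = ∑ i : Fin n, ∑ ℓ : Fin n, ∑ j : Fin n,
          a i j z * X₃ z j * X₂ z ℓ * fderiv ℝ (fun w => X₁ w i) z (Pi.single ℓ 1) :=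
        sum3_swap12 _
      have hP2 : (∑ i : Fin n, ∑ ℓ : Fin n, ∑ j : Fin n,
          a i ℓ z * X₃ z j * fderiv ℝ (fun w => X₁ w i) z (Pi.single j 1) * X₂ z ℓ)
          = ∑ i : Fin n, ∑ ℓ : Fin n, ∑ j : Fin n,
          a ℓ j z * X₃ z i * fderiv ℝ (fun w => X₁ w ℓ) z (Pi.single i 1) * X₂ z j :=
        (sum3_cycle fun i ℓ j =>
          a ℓ j z * X₃ z i * fderiv ℝ (fun w => X₁ w ℓ) z (Pi.single i 1) * X₂ z j).symm
      have hP3 : (∑ i : Fin n, ∑ ℓ : Fin n, ∑ j : Fin n,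
          a i ℓ z * X₁ z i * X₃ z j * fderiv ℝ (fun w => X₂ w ℓ) z (Pi.single j 1))
          = ∑ i : Fin n, ∑ ℓ : Fin n, ∑ j : Fin n,
          a i j z * X₁ z i * X₃ z ℓ * fderiv ℝ (fun w => X₂ w j) z (Pi.single ℓ 1) :=
        (sum3_swap23 fun i ℓ j =>
          a i j z * X₁ z i * X₃ z ℓ * fderiv ℝ (fun w => X₂ w j) z (Pi.single ℓ 1)).symm
      have hP4 : (∑ i : Fin n, ∑ ℓ : Fin n, ∑ j : Fin n,
          a ℓ j z * X₂ z j * X₁ z i * fderiv ℝ (fun w => X₃ w ℓ) z (Pi.single i 1))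
          = ∑ i : Fin n, ∑ ℓ : Fin n, ∑ j : Fin n,
          a j ℓ z * X₂ z ℓ * X₁ z i * fderiv ℝ (fun w => X₃ w j) z (Pi.single i 1) :=
        (sum3_swap23 fun i ℓ j =>
          a j ℓ z * X₂ z ℓ * X₁ z i * fderiv ℝ (fun w => X₃ w j) z (Pi.single i 1)).symm
      rw [hP1, hP2, hP3, hP4]
      ring
end

section
/- Let ⟨ , ⟩ be a smooth symmetric two-tensor on U and let ∇ be a connection on vector fields of U that is compatible with ⟨ , ⟩ and torsion-free. Then the Leibniz coboundary of the two-tensor ω = ⟨ , ⟩ satisfies, for all smooth vector fields X, Y, Z on U, dω(X⊗Y⊗Z) = 2⟨Y, ∇_X Z⟩. -/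
open scoped BigOperators

/-!
Compatibility turns the three derivative terms of `dω(X⊗Y⊗Z)` into covariant-derivative terms,
and torsion-freeness does the same for the three bracket terms. Everything then cancels in
pairs except `⟨Y, ∇_X Z⟩ + ⟨∇_X Z, Y⟩`, which is `2⟨Y, ∇_X Z⟩` by symmetry.
-/

section tens2

variable {n : ℕ} (a : Fin n → Fin n → (Fin n → ℝ) → ℝ) {z : Fin n → ℝ}

theorem tens2_comm_of_symm (hsym : ∀ p q, a p q z = a q p z)
    (X Y : (Fin n → ℝ) → (Fin n → ℝ)) : tens2 a X Y z = tens2 a Y X z := by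
  simp only [tens2]
  rw [Finset.sum_comm]
  refine Finset.sum_congr rfl fun p _ => Finset.sum_congr rfl fun q _ => ?_
  rw [hsym q p]
  ring

theorem tens2_eq_sub_left {X A B : (Fin n → ℝ) → (Fin n → ℝ)} (h : X z = A z - B z)
    (C : (Fin n → ℝ) → (Fin n → ℝ)) : tens2 a X C z = tens2 a A C z - tens2 a B C z := by
  simp only [tens2, h, Pi.sub_apply, sub_mul, mul_sub, Finset.sum_sub_distrib]

theorem tens2_eq_sub_right {Y A B : (Fin n → ℝ) → (Fin n → ℝ)} (h : Y z = A z - B z)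
    (C : (Fin n → ℝ) → (Fin n → ℝ)) : tens2 a C Y z = tens2 a C A z - tens2 a C B z := by
  simp only [tens2, h, Pi.sub_apply, mul_sub, Finset.sum_sub_distrib]

end tens2

theorem leibnizD_metric_connection_general (n : ℕ)
    (U : Set (Fin n → ℝ))
    (g : Fin n → Fin n → (Fin n → ℝ) → ℝ)
    (hsym : ∀ p q, ∀ z ∈ U, g p q z = g q p z)
    (nabla : ((Fin n → ℝ) → (Fin n → ℝ)) → ((Fin n → ℝ) → (Fin n → ℝ)) →
      ((Fin n → ℝ) → (Fin n → ℝ)))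
    -- compatibility: `X(⟨Y,Z⟩) = ⟨∇_X Y, Z⟩ + ⟨Y, ∇_X Z⟩`
    (hcompat : ∀ X Y Z, ContDiffOn ℝ (⊤ : ℕ∞) X U → ContDiffOn ℝ (⊤ : ℕ∞) Y U →
      ContDiffOn ℝ (⊤ : ℕ∞) Z U →
      ∀ z ∈ U, vfApply (tens2 g Y Z) X z
        = tens2 g (nabla X Y) Z z + tens2 g Y (nabla X Z) z)
    -- torsion-free: `[X,Y] = ∇_X Y − ∇_Y X`
    (htf : ∀ X Y, ContDiffOn ℝ (⊤ : ℕ∞) X U → ContDiffOn ℝ (⊤ : ℕ∞) Y U →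
      ∀ z ∈ U, vfBracket X Y z = nabla X Y z - nabla Y X z) :
    ∀ X Y Z, ContDiffOn ℝ (⊤ : ℕ∞) X U → ContDiffOn ℝ (⊤ : ℕ∞) Y U →
      ContDiffOn ℝ (⊤ : ℕ∞) Z U →
      ∀ z ∈ U, d2 g X Y Z z = 2 * tens2 g Y (nabla X Z) z := by
  intro X Y Z hX hY hZ z hz
  rw [d2, hcompat X Y Z hX hY hZ z hz, hcompat Y X Z hY hX hZ z hz,
    hcompat Z X Y hZ hX hY z hz,
    tens2_eq_sub_left g (htf X Y hX hY z hz), tens2_eq_sub_left g (htf X Z hX hZ z hz),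
    tens2_eq_sub_right g (htf Y Z hY hZ z hz),
    tens2_comm_of_symm g (fun p q => hsym p q z hz) (nabla X Z) Y]
  ring

/-- if `⟨ , ⟩ = Σ g_{pq} dx^p ⊗ dx^q` is a smooth symmetric two-tensor on
`U` and `∇` is a connection on vector fields of `U` compatible with `⟨ , ⟩` and
torsion-free, then the Leibniz coboundary of `ω = ⟨ , ⟩` satisfies
`dω(X⊗Y⊗Z) = 2⟨Y, ∇_X Z⟩`. -/
theorem leibnizD_metric_connection (n : ℕ) (hn : 1 ≤ n)
    (U : Set (Fin n → ℝ)) (hU : IsOpen U) (hUne : U.Nonempty)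
    (g : Fin n → Fin n → (Fin n → ℝ) → ℝ)
    (hg : ∀ p q, ContDiffOn ℝ (⊤ : ℕ∞) (g p q) U)
    (hsym : ∀ p q, ∀ z ∈ U, g p q z = g q p z)
    (nabla : ((Fin n → ℝ) → (Fin n → ℝ)) → ((Fin n → ℝ) → (Fin n → ℝ)) →
      ((Fin n → ℝ) → (Fin n → ℝ)))
    -- `∇` assigns to smooth vector fields a smooth vector field
    (hnab_smooth : ∀ X Y, ContDiffOn ℝ (⊤ : ℕ∞) X U → ContDiffOn ℝ (⊤ : ℕ∞) Y U →
      ContDiffOn ℝ (⊤ : ℕ∞) (nabla X Y) U)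
    -- `∇` is ℝ-bilinear
    (hadd_left : ∀ X X' Y, ContDiffOn ℝ (⊤ : ℕ∞) X U → ContDiffOn ℝ (⊤ : ℕ∞) X' U →
      ContDiffOn ℝ (⊤ : ℕ∞) Y U →
      ∀ z ∈ U, nabla (X + X') Y z = nabla X Y z + nabla X' Y z)
    (hadd_right : ∀ X Y Y', ContDiffOn ℝ (⊤ : ℕ∞) X U → ContDiffOn ℝ (⊤ : ℕ∞) Y U →
      ContDiffOn ℝ (⊤ : ℕ∞) Y' U →
      ∀ z ∈ U, nabla X (Y + Y') z = nabla X Y z + nabla X Y' z)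
    (hconst_smul : ∀ (c : ℝ) (X Y), ContDiffOn ℝ (⊤ : ℕ∞) X U →
      ContDiffOn ℝ (⊤ : ℕ∞) Y U →
      ∀ z ∈ U, nabla (fun w => c • X w) Y z = c • nabla X Y z ∧
        nabla X (fun w => c • Y w) z = c • nabla X Y z)
    -- `∇_{fX} Y = f ∇_X Y` for smooth `f`
    (hsmul_left : ∀ (f : (Fin n → ℝ) → ℝ) (X Y), ContDiffOn ℝ (⊤ : ℕ∞) f U →
      ContDiffOn ℝ (⊤ : ℕ∞) X U → ContDiffOn ℝ (⊤ : ℕ∞) Y U →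
      ∀ z ∈ U, nabla (fun w => f w • X w) Y z = f z • nabla X Y z)
    -- `∇_X (fY) = X(f)·Y + f ∇_X Y` for smooth `f`
    (hsmul_right : ∀ (f : (Fin n → ℝ) → ℝ) (X Y), ContDiffOn ℝ (⊤ : ℕ∞) f U →
      ContDiffOn ℝ (⊤ : ℕ∞) X U → ContDiffOn ℝ (⊤ : ℕ∞) Y U →
      ∀ z ∈ U, nabla X (fun w => f w • Y w) z
        = fderiv ℝ f z (X z) • Y z + f z • nabla X Y z)
    -- compatibility: `X(⟨Y,Z⟩) = ⟨∇_X Y, Z⟩ + ⟨Y, ∇_X Z⟩`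
    (hcompat : ∀ X Y Z, ContDiffOn ℝ (⊤ : ℕ∞) X U → ContDiffOn ℝ (⊤ : ℕ∞) Y U →
      ContDiffOn ℝ (⊤ : ℕ∞) Z U →
      ∀ z ∈ U, vfApply (tens2 g Y Z) X z
        = tens2 g (nabla X Y) Z z + tens2 g Y (nabla X Z) z)
    -- torsion-free: `[X,Y] = ∇_X Y − ∇_Y X`
    (htf : ∀ X Y, ContDiffOn ℝ (⊤ : ℕ∞) X U → ContDiffOn ℝ (⊤ : ℕ∞) Y U →
      ∀ z ∈ U, vfBracket X Y z = nabla X Y z - nabla Y X z) :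
    ∀ X Y Z, ContDiffOn ℝ (⊤ : ℕ∞) X U → ContDiffOn ℝ (⊤ : ℕ∞) Y U →
      ContDiffOn ℝ (⊤ : ℕ∞) Z U →
      ∀ z ∈ U, d2 g X Y Z z = 2 * tens2 g Y (nabla X Z) z :=
  leibnizD_metric_connection_general n U g hsym nabla hcompat htf
end

section
/- Let ω = Σ_{p,q=1}^n a_{pq} dx^p ⊗ dx^q be a smooth two-tensor on U such that dω(X₁⊗X₂⊗X₃) = 0 for all smooth vector fields X₁, X₂, X₃ on U. Then ω is skew-symmetric, i.e. a_{pq} = −a_{qp} on U for all p, q; hence ω is a two-form. -/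
open scoped BigOperators

/-- a smooth two-tensor `ω = Σ a_{pq} dx^p ⊗ dx^q` on `U` whose Leibniz
coboundary vanishes (on all smooth vector fields) is skew-symmetric, i.e. a
two-form. -/
theorem leibnizD_two_tensor_cocycle_skew (n : ℕ) (hn : 1 ≤ n)
    (U : Set (Fin n → ℝ)) (hU : IsOpen U) (hUne : U.Nonempty)
    (a : Fin n → Fin n → (Fin n → ℝ) → ℝ)
    (ha : ∀ p q, ContDiffOn ℝ (⊤ : ℕ∞) (a p q) U)
    (hclosed : ∀ X₁ X₂ X₃, ContDiffOn ℝ (⊤ : ℕ∞) X₁ U → ContDiffOn ℝ (⊤ : ℕ∞) X₂ U →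
      ContDiffOn ℝ (⊤ : ℕ∞) X₃ U → ∀ z ∈ U, d2 a X₁ X₂ X₃ z = 0) :
    ∀ p q, ∀ z ∈ U, a p q z = -(a q p z) := by
  intro p q z₀ hz₀
  have hn0 : 0 < n := hn
  set i₀ : Fin n := ⟨0, hn0⟩ with hi₀
  set e : Fin n → (Fin n → ℝ) := fun j => Pi.single j 1 with he
  set φ : (Fin n → ℝ) → ℝ := fun z => z i₀ - z₀ i₀ with hφ
  set X₁ : (Fin n → ℝ) → (Fin n → ℝ) := fun _ => e i₀ with hX₁
  set X₂ : (Fin n → ℝ) → (Fin n → ℝ) := fun _ => e p with hX₂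
  set X₃ : (Fin n → ℝ) → (Fin n → ℝ) := fun z => φ z • e q with hX₃
  set L : ((Fin n → ℝ) →L[ℝ] ℝ) := ContinuousLinearMap.proj i₀ with hL
  have hφd : ∀ z, HasFDerivAt φ L z := fun z => (L.hasFDerivAt).sub_const _
  have hφc : ContDiff ℝ (⊤ : ℕ∞) φ := by
    exact (L.contDiff).sub contDiff_const
  have hX₃c : ContDiffOn ℝ (⊤ : ℕ∞) X₃ U := (hφc.smul contDiff_const).contDiffOn
  have haD : ∀ p' q', DifferentiableAt ℝ (a p' q') z₀ := fun p' q' =>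
    ((ha p' q').differentiableOn (by simp)).differentiableAt (hU.mem_nhds hz₀)
  have E1 : tens2 a X₂ X₃ = fun z => a p q z * φ z := by
    funext z
    simp [tens2, hX₂, hX₃, he, Pi.single_apply, mul_ite, ite_mul, mul_zero, zero_mul,
      Finset.sum_ite_eq', mul_comm]
  have E2 : tens2 a X₁ X₃ = fun z => a i₀ q z * φ z := by
    funext z
    simp [tens2, hX₁, hX₃, he, Pi.single_apply, mul_ite, ite_mul, mul_zero, zero_mul,
      Finset.sum_ite_eq', mul_comm]
  have E3 : tens2 a X₁ X₂ = fun z => a i₀ p z := by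
    funext z
    simp [tens2, hX₁, hX₂, he, Pi.single_apply, mul_ite, ite_mul, mul_zero, zero_mul,
      Finset.sum_ite_eq']
  have hF : ∀ p' q', HasFDerivAt (fun z => a p' q' z * φ z) (a p' q' z₀ • L) z₀ := by
    intro p' q'
    have h := (haD p' q').hasFDerivAt.mul (hφd z₀)
    have hz : φ z₀ = 0 := by simp [hφ]
    simp [hz] at h; exact h
  have hX₃d : HasFDerivAt X₃ (L.smulRight (e q)) z₀ := (hφd z₀).smul_const (e q)
  have h := hclosed X₁ X₂ X₃ contDiffOn_const contDiffOn_const hX₃c z₀ hz₀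
  have hX₃0 : X₃ z₀ = 0 := by simp [hX₃, hφ]
  have hδ1 : X₁ z₀ i₀ = 1 := by simp [hX₁, he]
  simp only [d2, vfApply, E1, E2, E3] at h
  rw [(hF p q).fderiv, (hF i₀ q).fderiv] at h
  have hfc : ∀ (c : Fin n → ℝ) z, fderiv ℝ (fun _ : Fin n → ℝ => c) z = 0 := fun c z =>
    fderiv_const_apply c
  simp only [tens2, vfBracket, hX₁, hX₂, hfc, hX₃d.fderiv] at h
  simp only [hX₃0, ContinuousLinearMap.smul_apply, ContinuousLinearMap.smulRight_apply,
    ContinuousLinearMap.zero_apply, map_zero, sub_zero, zero_sub,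
    Pi.sub_apply, Pi.smul_apply, Pi.zero_apply, smul_eq_mul, hL,
    ContinuousLinearMap.proj_apply, he, hφ, Pi.single_apply, mul_ite, ite_mul, mul_zero, zero_mul,
    mul_one, one_mul, neg_zero, sub_self, Finset.sum_ite_eq', Finset.mem_univ, if_true,
    Finset.sum_const_zero, add_zero, zero_add] at h
  rcases eq_or_ne i₀ p with hip | hip
  · simp only [if_pos hip, Finset.sum_ite_eq', Finset.mem_univ, if_true] at h
    linarith
  · simp only [if_neg hip, Finset.sum_const_zero, add_zero] at h
    linarith
end

section
/- Let 2 ≤ k ≤ n+1 and let ω = Σ_I a_I dx^{i₁}⊗⋯⊗dx^{i_k} be a smooth k-tensor on U such that dω(X₁⊗⋯⊗X_{k+1}) = 0 for all smooth vector fields X₁,…,X_{k+1} on U. Then ω is a k-form, i.e. the coefficient functions a_I are alternating: for any multi-index I = (i₁,…,i_k) and any transposition of two of its entries, the coefficient changes sign, a_{i₁…i_p…i_q…i_k} = −a_{i₁…i_q…i_p…i_k} on U. -/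
open scoped BigOperators

/-- A smooth `k`-tensor with coefficients `a_I` applied to `k` vector fields:
`ω(X₁ ⊗ ⋯ ⊗ X_k)(z) = Σ_I a_I(z) · X₁^{i₁}(z) ⋯ X_k^{i_k}(z)`. -/
noncomputable def tensorApply {n : ℕ} (k : ℕ) (a : (Fin k → Fin n) → (Fin n → ℝ) → ℝ)
    (X : Fin k → (Fin n → ℝ) → (Fin n → ℝ)) : (Fin n → ℝ) → ℝ :=
  fun z => ∑ I : Fin k → Fin n, a I z * ∏ m : Fin k, X m z (I m)

/-- Leibniz coboundary of a `k`-tensor, evaluated on `k+1` vector fields. -/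
noncomputable def leibnizD {n : ℕ} (k : ℕ) (a : (Fin k → Fin n) → (Fin n → ℝ) → ℝ)
    (X : Fin (k+1) → (Fin n → ℝ) → (Fin n → ℝ)) : (Fin n → ℝ) → ℝ :=
  fun z =>
    (∑ i : Fin (k+1), (-1 : ℝ)^(i : ℕ) *
      fderiv ℝ (tensorApply k a (fun m => X (i.succAbove m))) z (X i z))
    + ∑ i : Fin (k+1), ∑ j : Fin (k+1),
        if h : i < j then
          (-1 : ℝ)^(j : ℕ) *
            tensorApply k a
              (Function.update (fun m => X (j.succAbove m))
                ⟨i.1, Nat.lt_of_lt_of_le (Fin.lt_def.mp h) (Nat.lt_succ_iff.mp j.isLt)⟩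
                (vfBracket (X i) (X j))) z
        else 0




def esing {n : ℕ} (b : Fin n) : Fin n → ℝ := Pi.single b 1






lemma tensorApply_sep {n : ℕ} (k : ℕ) (a : (Fin k → Fin n) → (Fin n → ℝ) → ℝ)
    (g : Fin k → (Fin n → ℝ) → ℝ) (b : Fin k → Fin n) (z : Fin n → ℝ) :
    tensorApply k a (fun m z => g m z • esing (b m)) z
      = (∏ m : Fin k, g m z) * a b z := by
  rw [tensorApply]
  rw [Finset.sum_eq_single b]
  · rw [mul_comm]
    congr 1
    apply Finset.prod_congr rfl
    intro m _
    simp [esing, Pi.single_apply]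
  · intro I _ hI
    obtain ⟨m, hm⟩ := Function.ne_iff.mp hI
    rw [Finset.prod_eq_zero (Finset.mem_univ m)]
    · exact mul_zero _
    · simp [esing, Pi.single_apply, hm]
  · intro h; exact absurd (Finset.mem_univ b) h

lemma tensorApply_zero_slot {n : ℕ} (k : ℕ) (a : (Fin k → Fin n) → (Fin n → ℝ) → ℝ)
    (X : Fin k → (Fin n → ℝ) → (Fin n → ℝ)) (z : Fin n → ℝ) (m₀ : Fin k)
    (h : X m₀ z = 0) : tensorApply k a X z = 0 := by
  rw [tensorApply]
  apply Finset.sum_eq_zero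
  intro I _
  rw [Finset.prod_eq_zero (Finset.mem_univ m₀)]
  · exact mul_zero _
  · simp [h]


noncomputable def lmap {n : ℕ} (q b : Fin n) : (Fin n → ℝ) →L[ℝ] (Fin n → ℝ) :=
  (ContinuousLinearMap.proj q).smulRight (esing b)

lemma lmap_apply {n : ℕ} (q b : Fin n) (z : Fin n → ℝ) : lmap q b z = z q • esing b := by
  simp [lmap]

lemma lfield_eq {n : ℕ} (q b : Fin n) : (fun z : Fin n → ℝ => z q • esing b) = ⇑(lmap q b) := by
  funext z; simp [lmap]

lemma fderiv_lfield {n : ℕ} (q b : Fin n) (z : Fin n → ℝ) :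
    fderiv ℝ (fun z : Fin n → ℝ => z q • esing b) z = lmap q b := by
  rw [lfield_eq]; exact (lmap q b).fderiv

lemma bracket_cc {n : ℕ} (v w : Fin n → ℝ) (z : Fin n → ℝ) :
    vfBracket (fun _ => v) (fun _ => w) z = 0 := by
  simp [vfBracket, fderiv_const]

lemma bracket_cl {n : ℕ} (v : Fin n → ℝ) (q b : Fin n) (z : Fin n → ℝ) :
    vfBracket (fun _ => v) (fun z : Fin n → ℝ => z q • esing b) z = v q • esing b := by
  simp [vfBracket, fderiv_const, fderiv_lfield, lmap_apply]

lemma bracket_lc {n : ℕ} (v : Fin n → ℝ) (q b : Fin n) (z : Fin n → ℝ) :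
    vfBracket (fun z : Fin n → ℝ => z q • esing b) (fun _ => v) z = -(v q) • esing b := by
  simp [vfBracket, fderiv_const, fderiv_lfield, lmap_apply, neg_smul]

lemma diff_proj {n : ℕ} (q : Fin n) (z : Fin n → ℝ) : DifferentiableAt ℝ (fun z : Fin n → ℝ => z q) z := by
  exact (differentiable_apply q).differentiableAt

lemma fderiv_proj {n : ℕ} (q : Fin n) (z : Fin n → ℝ) (w : Fin n → ℝ) :
    fderiv ℝ (fun z : Fin n → ℝ => z q) z w = w q := by
  have : (fun z : Fin n → ℝ => z q) = ⇑(ContinuousLinearMap.proj (R := ℝ) (φ := fun _ : Fin n => ℝ) q) := rfl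
  rw [this, ContinuousLinearMap.fderiv]
  rfl

lemma fderiv_mul_proj {n : ℕ} (q : Fin n) (h : (Fin n → ℝ) → ℝ) (z : Fin n → ℝ)
    (hh : DifferentiableAt ℝ h z) (w : Fin n → ℝ) :
    fderiv ℝ (fun z => z q * h z) z w = z q * fderiv ℝ h z w + h z * w q := by
  rw [fderiv_fun_mul (diff_proj q z) hh]
  simp [fderiv_proj]


lemma succAbove_val {k : ℕ} (i : Fin (k+1)) (p : Fin k) :
    ((i.succAbove p) : ℕ) = if p.1 < i.1 then p.1 else p.1 + 1 := by
  rcases lt_or_ge p.1 i.1 with h | h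
  · rw [if_pos h, Fin.succAbove, if_pos (by rwa [Fin.lt_def])]
    rfl
  · rw [if_neg (by omega), Fin.succAbove, if_neg (by rw [Fin.lt_def]; simp; omega)]
    rfl

def Jx {n k : ℕ} (J : Fin k → Fin n) (q : Fin n) : ℕ → Fin n :=
  fun v => if h : v < k then J ⟨v, h⟩ else q

lemma Jx_eq {n k : ℕ} (J : Fin k → Fin n) (q : Fin n) (p : Fin k) : Jx J q p.1 = J p := by
  simp [Jx, p.isLt]

def bF {n k : ℕ} (m : ℕ) (q : Fin n) (J : Fin k → Fin n) : Fin (k+1) → Fin n := fun i =>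
  if i.1 < m then Jx J q i.1 else if i.1 = m then q else Jx J q (i.1 - 1)

def ggF {n k : ℕ} (m : ℕ) (q : Fin n) : Fin (k+1) → (Fin n → ℝ) → ℝ :=
  fun i => if i.1 = m+2 then (fun w => w q) else fun _ => (1:ℝ)

section idx
variable {n k : ℕ} (m : ℕ) (q : Fin n) (J : Fin k → Fin n) (hm : m + 1 < k)

-- (A)  b ∘ succAbove ⟨m⟩ = J
lemma bF_A :
    (fun p => bF m q J ((⟨m, by omega⟩ : Fin (k+1)).succAbove p)) = J := by
  funext p
  have hv := succAbove_val (⟨m, by omega⟩ : Fin (k+1)) p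
  simp only at hv
  rw [bF, hv]
  have hpk := p.isLt
  by_cases hpm : p.1 < m
  · rw [if_pos hpm] at *
    rw [if_pos hpm]
    exact Jx_eq J q p
  · rw [if_neg hpm] at *
    rw [if_neg (by omega), if_neg (by omega), show p.1 + 1 - 1 = p.1 by omega]
    exact Jx_eq J q p

-- (B)
lemma bF_B :
    Function.update (fun p => bF m q J ((⟨m+2, Nat.succ_lt_succ hm⟩ : Fin (k+1)).succAbove p))
      (⟨m, by omega⟩ : Fin k) (bF m q J ⟨m+2, by omega⟩)
    = J ∘ Equiv.swap ⟨m, by omega⟩ ⟨m+1, hm⟩ := by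
  funext p
  simp only [Function.comp_apply]
  by_cases hp : p = (⟨m, by omega⟩ : Fin k)
  · subst hp
    rw [Function.update_self, Equiv.swap_apply_left, bF]
    simp only
    rw [if_neg (by omega), if_neg (by omega), show m+2-1 = m+1 by omega]
    exact Jx_eq J q ⟨m+1, hm⟩
  · rw [Function.update_of_ne hp]
    have hp' : p.1 ≠ m := fun h => hp (Fin.ext h)
    have hv := succAbove_val (⟨m+2, Nat.succ_lt_succ hm⟩ : Fin (k+1)) p
    simp only at hv
    by_cases hp2 : p = (⟨m+1, hm⟩ : Fin k)
    · subst hp2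
      simp only at hv hp'
      norm_num at hv
      rw [Equiv.swap_apply_right, bF, hv]
      rw [if_neg (by omega), if_neg (by omega), show m+1-1 = m by omega]
      exact Jx_eq J q ⟨m, by omega⟩
    · have hp2' : p.1 ≠ m + 1 := fun h => hp2 (Fin.ext h)
      rw [Equiv.swap_apply_of_ne_of_ne hp hp2, bF, hv]
      have hpk := p.isLt
      by_cases h : p.1 < m + 2
      · rw [if_pos h, if_pos (by omega)]
        exact Jx_eq J q p
      · rw [if_neg h, if_neg (by omega), if_neg (by omega), show p.1+1-1 = p.1 by omega]
        exact Jx_eq J q p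

-- (C)
lemma bF_C :
    (fun p => bF m q J ((⟨m+1, by omega⟩ : Fin (k+1)).succAbove p))
    = Function.update (fun p => bF m q J ((⟨m+2, Nat.succ_lt_succ hm⟩ : Fin (k+1)).succAbove p))
        (⟨m+1, hm⟩ : Fin k) (bF m q J ⟨m+2, by omega⟩) := by
  funext p
  have hv1 := succAbove_val (⟨m+1, by omega⟩ : Fin (k+1)) p
  have hv2 := succAbove_val (⟨m+2, Nat.succ_lt_succ hm⟩ : Fin (k+1)) p
  simp only at hv1 hv2
  by_cases hp : p = (⟨m+1, hm⟩ : Fin k)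
  · subst hp
    rw [Function.update_self]
    congr 1
    apply Fin.ext
    rw [hv1]
    simp
  · rw [Function.update_of_ne hp]
    have hp' : p.1 ≠ m + 1 := fun h => hp (Fin.ext h)
    congr 1
    apply Fin.ext
    rw [hv1, hv2]
    split_ifs <;> omega

-- (D)
lemma bF_D (j : Fin (k+1)) (hj : m + 2 < j.1) :
    Function.update (fun p => bF m q J (j.succAbove p))
      (⟨m+2, Nat.lt_of_lt_of_le hj (Nat.lt_succ_iff.mp j.isLt)⟩ : Fin k)
      (bF m q J ⟨m+2, by omega⟩)
    = fun p => bF m q J (j.succAbove p) := by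
  have h1 : j.succAbove (⟨m+2, Nat.lt_of_lt_of_le hj (Nat.lt_succ_iff.mp j.isLt)⟩ : Fin k)
      = (⟨m+2, Nat.succ_lt_succ hm⟩ : Fin (k+1)) := by
    apply Fin.ext
    rw [succAbove_val]
    simp only
    rw [if_pos hj]
  rw [show (bF m q J ⟨m+2, by omega⟩ : Fin n)
      = (fun p => bF m q J (j.succAbove p))
          (⟨m+2, Nat.lt_of_lt_of_le hj (Nat.lt_succ_iff.mp j.isLt)⟩ : Fin k) by
    simp only [h1]]
  exact Function.update_eq_self _ _

-- values
lemma bF_at_m (hmk : m + 1 < k) : bF m q J (⟨m, by omega⟩ : Fin (k+1)) = q := by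
  rw [bF]; simp

lemma bF_ne_q (hq : ∀ p : Fin k, p.1 < m → J p ≠ q) (i : Fin (k+1)) (hi : i.1 < m)
    (hik : i.1 < k) : bF m q J i ≠ q := by
  rw [bF, if_pos hi]
  rw [show Jx J q i.1 = J ⟨i.1, hik⟩ from Jx_eq J q ⟨i.1, hik⟩]
  exact hq _ hi

end idx

section fields
variable {n k : ℕ}

noncomputable def XF (m : ℕ) (q : Fin n) (J : Fin k → Fin n) :
    Fin (k+1) → (Fin n → ℝ) → (Fin n → ℝ) :=
  fun i z => ggF m q i z • esing (bF m q J i)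

noncomputable def XcF (m : ℕ) (q : Fin n) (J : Fin k → Fin n) :
    Fin (k+1) → (Fin n → ℝ) → (Fin n → ℝ) :=
  fun i _ => esing (bF m q J i)

def dl (m : ℕ) (q : Fin n) (J : Fin k → Fin n) (i : Fin (k+1)) : ℝ :=
  if q = bF m q J i then 1 else 0

lemma esing_apply_q (q b : Fin n) : esing b q = if q = b then (1:ℝ) else 0 := by
  simp [esing, Pi.single_apply]

noncomputable def CmF (m : ℕ) (q : Fin n) (J : Fin k → Fin n) (hm : m + 1 < k)
    (i : Fin (k+1)) : Fin k → Fin n :=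
  if h : i.1 < k then
    Function.update (fun p => bF m q J ((⟨m+2, Nat.succ_lt_succ hm⟩ : Fin (k+1)).succAbove p))
      ⟨i.1, h⟩ (bF m q J ⟨m+2, by omega⟩)
  else J

variable (m : ℕ) (q : Fin n) (J : Fin k → Fin n) (hm : m + 1 < k)

lemma XF_const (i : Fin (k+1)) (hi : i.1 ≠ m + 2) :
    XF m q J i = fun _ => esing (bF m q J i) := by
  funext w
  rw [XF, ggF, if_neg hi, one_smul]

lemma XF_lin (i : Fin (k+1)) (hi : i.1 = m + 2) :
    XF m q J i = fun w => w q • esing (bF m q J i) := by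
  funext w
  rw [XF, ggF, if_pos hi]

lemma XF_smooth (i : Fin (k+1)) : ContDiff ℝ (⊤ : ℕ∞) (XF m q J i) := by
  by_cases hi : i.1 = m + 2
  · rw [XF_lin m q J i hi, lfield_eq]
    exact (lmap q (bF m q J i)).contDiff
  · rw [XF_const m q J i hi]
    exact contDiff_const

lemma XcF_smooth (i : Fin (k+1)) : ContDiff ℝ (⊤ : ℕ∞) (XcF m q J i) :=
  contDiff_const

lemma prod_ggF (i : Fin (k+1)) (w : Fin n → ℝ) :
    (∏ p : Fin k, ggF m q (i.succAbove p) w)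
      = if i = (⟨m+2, Nat.succ_lt_succ hm⟩ : Fin (k+1)) then 1 else w q := by
  by_cases hi : i = (⟨m+2, Nat.succ_lt_succ hm⟩ : Fin (k+1))
  · rw [if_pos hi]
    apply Finset.prod_eq_one
    intro p _
    rw [ggF, if_neg]
    intro h
    exact Fin.succAbove_ne i p (Fin.ext (by rw [h, hi]))
  · rw [if_neg hi]
    obtain ⟨p₀, hp₀⟩ := Fin.exists_succAbove_eq (Ne.symm hi)
    rw [Finset.prod_eq_single p₀]
    · rw [hp₀, ggF, if_pos rfl]
    · intro p _ hp
      rw [ggF, if_neg]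
      intro h
      apply hp
      apply Fin.succAbove_right_injective (p := i)
      apply Fin.ext
      simp [h, hp₀]
    · intro h
      exact absurd (Finset.mem_univ p₀) h

lemma tensor_XF (a : (Fin k → Fin n) → (Fin n → ℝ) → ℝ) (i : Fin (k+1)) :
    tensorApply k a (fun p => XF m q J (i.succAbove p))
      = fun w => (if i = (⟨m+2, Nat.succ_lt_succ hm⟩ : Fin (k+1)) then 1 else w q)
          * a (fun p => bF m q J (i.succAbove p)) w := by
  funext w
  rw [show (fun p => XF m q J (i.succAbove p))
      = (fun p z => ggF m q (i.succAbove p) z • esing (bF m q J (i.succAbove p))) from rfl,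
    tensorApply_sep, prod_ggF m q hm i w]

lemma tensor_XcF (a : (Fin k → Fin n) → (Fin n → ℝ) → ℝ) (i : Fin (k+1)) :
    tensorApply k a (fun p => XcF m q J (i.succAbove p))
      = fun w => a (fun p => bF m q J (i.succAbove p)) w := by
  funext w
  rw [show (fun p => XcF m q J (i.succAbove p))
      = (fun p z => (fun (_ : Fin k) (_ : Fin n → ℝ) => (1:ℝ)) p z • esing (bF m q J (i.succAbove p))) from by
        funext p z; rw [XcF, one_smul],
    tensorApply_sep]
  simp

end fields

section terms
variable {n k : ℕ} (m : ℕ) (q : Fin n) (J : Fin k → Fin n) (hm : m + 1 < k)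
  (a : (Fin k → Fin n) → (Fin n → ℝ) → ℝ) (z : Fin n → ℝ)

lemma T1X_term (hdiff : ∀ I, DifferentiableAt ℝ (a I) z) (i : Fin (k+1)) :
    fderiv ℝ (tensorApply k a (fun p => XF m q J (i.succAbove p))) z (XF m q J i z)
      = z q * fderiv ℝ (a (fun p => bF m q J (i.succAbove p))) z (esing (bF m q J i))
        + (if i = (⟨m+2, Nat.succ_lt_succ hm⟩ : Fin (k+1)) then 0
           else dl m q J i * a (fun p => bF m q J (i.succAbove p)) z) := by
  rw [tensor_XF m q J hm a i]
  by_cases hi : i = (⟨m+2, Nat.succ_lt_succ hm⟩ : Fin (k+1))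
  · simp only [if_pos hi, one_mul]
    rw [show XF m q J i z = z q • esing (bF m q J i) from by
      rw [XF_lin m q J i (by rw [hi])]]
    rw [(fderiv ℝ (a fun p => bF m q J (i.succAbove p)) z).map_smul, smul_eq_mul, add_zero]
  · simp only [if_neg hi]
    rw [fderiv_mul_proj q _ z (hdiff _)]
    rw [show XF m q J i z = esing (bF m q J i) from by
      rw [XF_const m q J i (fun h => hi (Fin.ext h))]]
    rw [esing_apply_q, dl]
    ring

lemma T1c_term (i : Fin (k+1)) :
    fderiv ℝ (tensorApply k a (fun p => XcF m q J (i.succAbove p))) z (XcF m q J i z)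
      = fderiv ℝ (a (fun p => bF m q J (i.succAbove p))) z (esing (bF m q J i)) := by
  rw [tensor_XcF]
  rfl

lemma T2c_term (i j : Fin (k+1)) :
    (if h : i < j then
      (-1 : ℝ)^(j : ℕ) *
        tensorApply k a
          (Function.update (fun p => XcF m q J (j.succAbove p))
            ⟨i.1, Nat.lt_of_lt_of_le (Fin.lt_def.mp h) (Nat.lt_succ_iff.mp j.isLt)⟩
            (vfBracket (XcF m q J i) (XcF m q J j))) z
    else 0) = 0 := by
  by_cases hij : i < j
  · rw [dif_pos hij]
    rw [tensorApply_zero_slot k a _ z ⟨i.1, Nat.lt_of_lt_of_le (Fin.lt_def.mp hij) (Nat.lt_succ_iff.mp j.isLt)⟩, mul_zero]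
    rw [Function.update_self]
    exact bracket_cc _ _ z
  · rw [dif_neg hij]

end terms

section terms2
variable {n k : ℕ} (m : ℕ) (q : Fin n) (J : Fin k → Fin n) (hm : m + 1 < k)
  (a : (Fin k → Fin n) → (Fin n → ℝ) → ℝ) (z : Fin n → ℝ)

lemma T2X_term (i j : Fin (k+1)) :
    (if h : i < j then
      (-1 : ℝ)^(j : ℕ) *
        tensorApply k a
          (Function.update (fun p => XF m q J (j.succAbove p))
            ⟨i.1, Nat.lt_of_lt_of_le (Fin.lt_def.mp h) (Nat.lt_succ_iff.mp j.isLt)⟩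
            (vfBracket (XF m q J i) (XF m q J j))) z
    else 0)
    = if i < j then
        ((-1:ℝ)^(j:ℕ) *
          (if j = (⟨m+2, Nat.succ_lt_succ hm⟩ : Fin (k+1)) then
             dl m q J i * a (CmF m q J hm i) z
           else if i = (⟨m+2, Nat.succ_lt_succ hm⟩ : Fin (k+1)) then
             -(dl m q J j * a (fun p => bF m q J (j.succAbove p)) z)
           else 0))
      else 0 := by
  by_cases hij : i < j
  case neg => rw [dif_neg hij, if_neg hij]
  rw [dif_pos hij, if_pos hij]
  congr 1
  set pos : Fin k := ⟨i.1, Nat.lt_of_lt_of_le (Fin.lt_def.mp hij) (Nat.lt_succ_iff.mp j.isLt)⟩ with hposdef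
  by_cases hjr : j = (⟨m+2, Nat.succ_lt_succ hm⟩ : Fin (k+1))
  · rw [if_pos hjr]
    subst hjr
    have hil : i.1 < m + 2 := Fin.lt_def.mp hij
    have hine : i.1 ≠ m + 2 := by omega
    have hbr : vfBracket (XF m q J i) (XF m q J ⟨m+2, Nat.succ_lt_succ hm⟩)
        = fun _ => (esing (bF m q J i) q) • esing (bF m q J ⟨m+2, Nat.succ_lt_succ hm⟩) := by
      rw [XF_const m q J i hine, XF_lin m q J _ rfl]
      funext w
      exact bracket_cl _ q _ w
    have htuple : Function.update
          (fun p => XF m q J ((⟨m+2, Nat.succ_lt_succ hm⟩ : Fin (k+1)).succAbove p)) pos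
          (vfBracket (XF m q J i) (XF m q J ⟨m+2, Nat.succ_lt_succ hm⟩))
        = fun p w => (Function.update (fun (_ : Fin k) (_ : Fin n → ℝ) => (1:ℝ)) pos
              (fun _ => esing (bF m q J i) q)) p w
            • esing (Function.update
                (fun p => bF m q J ((⟨m+2, Nat.succ_lt_succ hm⟩ : Fin (k+1)).succAbove p))
                pos (bF m q J ⟨m+2, Nat.succ_lt_succ hm⟩) p) := by
      funext p w
      rcases eq_or_ne p pos with h | h
      · subst h
        rw [Function.update_self, Function.update_self, Function.update_self, hbr]
      · rw [Function.update_of_ne h, Function.update_of_ne h, Function.update_of_ne h]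
        simp only [XF, ggF]
        rw [if_neg (fun hh => Fin.succAbove_ne (⟨m+2, Nat.succ_lt_succ hm⟩ : Fin (k+1)) p
          (Fin.ext hh))]
    rw [htuple, tensorApply_sep]
    have hprod : (∏ p : Fin k, Function.update (fun (_ : Fin k) (_ : Fin n → ℝ) => (1:ℝ)) pos
        (fun _ => esing (bF m q J i) q) p z) = esing (bF m q J i) q := by
      rw [Finset.prod_eq_single pos]
      · rw [Function.update_self]
      · intro p _ hp
        rw [Function.update_of_ne hp]
      · intro h
        exact absurd (Finset.mem_univ pos) h
    rw [hprod, esing_apply_q, dl]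
    congr 2
    rw [CmF, dif_pos (show i.1 < k by omega)]
  · rw [if_neg hjr]
    by_cases hir : i = (⟨m+2, Nat.succ_lt_succ hm⟩ : Fin (k+1))
    · rw [if_pos hir]
      have hival : i.1 = m + 2 := by rw [hir]
      have hrj : m + 2 < j.1 := by
        have h2 := Fin.lt_def.mp hij
        omega
      have hjne : j.1 ≠ m + 2 := fun h => hjr (Fin.ext h)
      have hposval : pos.1 = m + 2 := hival
      have hposim : j.succAbove pos = (⟨m+2, Nat.succ_lt_succ hm⟩ : Fin (k+1)) := by
        apply Fin.ext
        rw [succAbove_val, hposval, if_pos hrj]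
      have hbr : vfBracket (XF m q J i) (XF m q J j)
          = fun _ => (-(esing (bF m q J j) q)) • esing (bF m q J i) := by
        rw [XF_const m q J j hjne, XF_lin m q J i hival]
        funext w
        exact bracket_lc _ q _ w
      have htuple : Function.update (fun p => XF m q J (j.succAbove p)) pos
            (vfBracket (XF m q J i) (XF m q J j))
          = fun p w => (Function.update (fun p => ggF m q (j.succAbove p)) pos
                (fun _ => -(esing (bF m q J j) q))) p w
              • esing (Function.update (fun p => bF m q J (j.succAbove p)) pos
                  (bF m q J i) p) := by
        funext p w
        rcases eq_or_ne p pos with h | h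
        · subst h
          rw [Function.update_self, Function.update_self, Function.update_self, hbr]
        · rw [Function.update_of_ne h, Function.update_of_ne h, Function.update_of_ne h]
          rfl
      rw [htuple, tensorApply_sep]
      have hprod : (∏ p : Fin k, Function.update (fun p => ggF m q (j.succAbove p)) pos
          (fun _ => -(esing (bF m q J j) q)) p z) = -(esing (bF m q J j) q) := by
        rw [Finset.prod_eq_single pos]
        · rw [Function.update_self]
        · intro p _ hp
          rw [Function.update_of_ne hp, ggF, if_neg]
          intro hh
          apply hp
          apply Fin.succAbove_right_injective (p := j)
          rw [hposim]
          exact Fin.ext hh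
        · intro h
          exact absurd (Finset.mem_univ pos) h
      have hidx : Function.update (fun p => bF m q J (j.succAbove p)) pos (bF m q J i)
          = fun p => bF m q J (j.succAbove p) := by
        rw [show bF m q J i = (fun p => bF m q J (j.succAbove p)) pos from by
          show bF m q J i = bF m q J (j.succAbove pos)
          rw [hposim, hir]]
        exact Function.update_eq_self _ _
      rw [hprod, hidx, esing_apply_q, dl]
      ring
    · rw [if_neg hir]
      rw [tensorApply_zero_slot k a _ z pos]
      rw [Function.update_self]
      rw [XF_const m q J i (fun h => hir (Fin.ext h)), XF_const m q J j (fun h => hjr (Fin.ext h))]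
      exact bracket_cc _ _ z

end terms2

section assemble
variable {n k : ℕ} (m : ℕ) (q : Fin n) (J : Fin k → Fin n) (hm : m + 1 < k)
  (a : (Fin k → Fin n) → (Fin n → ℝ) → ℝ) (z : Fin n → ℝ)

noncomputable def uuF : Fin (k+1) → ℝ := fun i =>
  (-1:ℝ)^(i:ℕ) * (if i = (⟨m+2, Nat.succ_lt_succ hm⟩ : Fin (k+1)) then 0
    else dl m q J i * a (fun p => bF m q J (i.succAbove p)) z)

noncomputable def vvF : Fin (k+1) → ℝ := fun i =>
  if i < (⟨m+2, Nat.succ_lt_succ hm⟩ : Fin (k+1)) then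
    (-1:ℝ)^(m+2) * (dl m q J i * a (CmF m q J hm i) z)
  else 0

noncomputable def hhF : Fin (k+1) → ℝ := fun j =>
  if (⟨m+2, Nat.succ_lt_succ hm⟩ : Fin (k+1)) < j then
    (-1:ℝ)^(j:ℕ) * (-(dl m q J j * a (fun p => bF m q J (j.succAbove p)) z))
  else 0

noncomputable def T2fF : Fin (k+1) → Fin (k+1) → ℝ := fun i j =>
  if i < j then
    ((-1:ℝ)^(j:ℕ) *
      (if j = (⟨m+2, Nat.succ_lt_succ hm⟩ : Fin (k+1)) then
         dl m q J i * a (CmF m q J hm i) z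
       else if i = (⟨m+2, Nat.succ_lt_succ hm⟩ : Fin (k+1)) then
         -(dl m q J j * a (fun p => bF m q J (j.succAbove p)) z)
       else 0))
  else 0

lemma innerSumT2 (i : Fin (k+1)) :
    (∑ j : Fin (k+1), T2fF m q J hm a z i j)
      = Function.update (vvF m q J hm a z) (⟨m+2, Nat.succ_lt_succ hm⟩ : Fin (k+1))
          (∑ j : Fin (k+1), hhF m q J hm a z j) i := by
  rcases eq_or_ne i (⟨m+2, Nat.succ_lt_succ hm⟩ : Fin (k+1)) with hi | hi
  · subst hi
    rw [Function.update_self]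
    apply Finset.sum_congr rfl
    intro j _
    rw [T2fF, hhF]
    by_cases hj : (⟨m+2, Nat.succ_lt_succ hm⟩ : Fin (k+1)) < j
    · rw [if_pos hj, if_pos hj, if_neg (by intro h; subst h; exact lt_irrefl _ hj), if_pos rfl]
    · rw [if_neg hj, if_neg hj]
  · rw [Function.update_of_ne hi]
    rw [Finset.sum_eq_single (⟨m+2, Nat.succ_lt_succ hm⟩ : Fin (k+1))]
    · rw [T2fF, vvF]
      by_cases hlt : i < (⟨m+2, Nat.succ_lt_succ hm⟩ : Fin (k+1))
      · rw [if_pos hlt, if_pos hlt, if_pos rfl]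
    
      · rw [if_neg hlt, if_neg hlt]
    · intro j _ hj
      rw [T2fF]
      by_cases hlt : i < j
      · rw [if_pos hlt, if_neg hj, if_neg hi, mul_zero]
      · rw [if_neg hlt]
    · intro h
      exact absurd (Finset.mem_univ _) h

end assemble

section vanish
variable {n k : ℕ} (m : ℕ) (q : Fin n) (J : Fin k → Fin n) (hm : m + 1 < k)
  (a : (Fin k → Fin n) → (Fin n → ℝ) → ℝ) (z : Fin n → ℝ)

lemma FF_vanish (hq : ∀ p : Fin k, p.1 < m → J p ≠ q) (i : Fin (k+1))
    (hi : i ≠ (⟨m, by omega⟩ : Fin (k+1))) :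
    uuF m q J hm a z i + vvF m q J hm a z i + hhF m q J hm a z i = 0 := by
  have him : i.1 ≠ m := fun h => hi (Fin.ext h)
  rw [uuF, vvF, hhF]
  rcases lt_trichotomy i.1 (m+2) with hlt | heq | hgt
  · have hir : i ≠ (⟨m+2, Nat.succ_lt_succ hm⟩ : Fin (k+1)) :=
      fun h => absurd (show i.1 = m+2 from congrArg Fin.val h) (by omega)
    rw [if_neg hir, if_pos (show i < (⟨m+2, Nat.succ_lt_succ hm⟩ : Fin (k+1)) from Fin.lt_def.mpr hlt),
      if_neg (show ¬ (⟨m+2, Nat.succ_lt_succ hm⟩ : Fin (k+1)) < i from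
        fun h => absurd (show m+2 < i.1 from Fin.lt_def.mp h) (by omega))]
    rcases Nat.lt_or_ge i.1 m with hlm | hgm
    · have hdl : dl m q J i = 0 := by
        rw [dl, if_neg (fun h => (bF_ne_q m q J hq i hlm (by omega)) h.symm)]
      rw [hdl]
      ring
    · have him1 : i.1 = m + 1 := by omega
      have hieq : i = (⟨m+1, by omega⟩ : Fin (k+1)) := Fin.ext him1
      have hBC : (fun p => bF m q J (i.succAbove p)) = CmF m q J hm i := by
        rw [hieq, CmF, dif_pos (show m+1 < k from hm)]
        exact bF_C m q J hm
      rw [hBC, show ((i:ℕ)) = m+1 from him1]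
      rw [pow_succ, pow_succ, pow_succ]
      ring
  · have hir : i = (⟨m+2, Nat.succ_lt_succ hm⟩ : Fin (k+1)) := Fin.ext heq
    rw [if_pos hir, if_neg (show ¬ i < (⟨m+2, Nat.succ_lt_succ hm⟩ : Fin (k+1)) from by
        rw [hir]; exact lt_irrefl _),
      if_neg (show ¬ (⟨m+2, Nat.succ_lt_succ hm⟩ : Fin (k+1)) < i from by
        rw [hir]; exact lt_irrefl _)]
    ring
  · have hir : i ≠ (⟨m+2, Nat.succ_lt_succ hm⟩ : Fin (k+1)) :=
      fun h => absurd (show i.1 = m+2 from congrArg Fin.val h) (by omega)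
    rw [if_neg hir,
      if_neg (show ¬ i < (⟨m+2, Nat.succ_lt_succ hm⟩ : Fin (k+1)) from
        fun h => absurd (show i.1 < m+2 from Fin.lt_def.mp h) (by omega)),
      if_pos (show (⟨m+2, Nat.succ_lt_succ hm⟩ : Fin (k+1)) < i from Fin.lt_def.mpr (show m+2 < i.1 by omega))]
    ring

lemma FF_at_m :
    uuF m q J hm a z ⟨m, by omega⟩ + vvF m q J hm a z ⟨m, by omega⟩
      + hhF m q J hm a z ⟨m, by omega⟩
    = (-1:ℝ)^m * (a J z + a (J ∘ Equiv.swap ⟨m, by omega⟩ ⟨m+1, hm⟩) z) := by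
  rw [uuF, vvF, hhF]
  rw [if_neg (show (⟨m, by omega⟩ : Fin (k+1)) ≠ ⟨m+2, Nat.succ_lt_succ hm⟩ from
      fun h => absurd (show m = m+2 from congrArg Fin.val h) (by omega)),
    if_pos (show (⟨m, by omega⟩ : Fin (k+1)) < ⟨m+2, Nat.succ_lt_succ hm⟩ from
      Fin.lt_def.mpr (show m < m+2 by omega)),
    if_neg (show ¬ (⟨m+2, Nat.succ_lt_succ hm⟩ : Fin (k+1)) < (⟨m, by omega⟩ : Fin (k+1)) from
      fun h => absurd (show m+2 < m from Fin.lt_def.mp h) (by omega))]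
  have hdl : dl m q J (⟨m, by omega⟩ : Fin (k+1)) = 1 := by
    rw [dl]
    rw [bF_at_m m q J hm hm]
    exact if_pos rfl
  have hC : CmF m q J hm ⟨m, by omega⟩ = J ∘ Equiv.swap ⟨m, by omega⟩ ⟨m+1, hm⟩ := by
    rw [CmF, dif_pos (show m < k by omega)]
    exact bF_B m q J hm
  rw [hdl, hC, bF_A m q J hm]
  show (-1:ℝ)^m * (1 * a J z) + (-1:ℝ)^(m+2) * (1 * a (J ∘ Equiv.swap ⟨m, by omega⟩ ⟨m+1, hm⟩) z) + 0 = _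
  rw [pow_add]
  ring

end vanish

lemma adjacent {n k : ℕ} (U : Set (Fin n → ℝ)) (hU : IsOpen U)
    (a : (Fin k → Fin n) → (Fin n → ℝ) → ℝ)
    (ha : ∀ I, ContDiffOn ℝ (⊤ : ℕ∞) (a I) U)
    (hclosed : ∀ X : Fin (k+1) → (Fin n → ℝ) → (Fin n → ℝ),
      (∀ i, ContDiffOn ℝ (⊤ : ℕ∞) (X i) U) → ∀ z ∈ U, leibnizD k a X z = 0)
    (hkn : k ≤ n + 1)
    (J : Fin k → Fin n) (m : ℕ) (hm : m + 1 < k) (z : Fin n → ℝ) (hz : z ∈ U) :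
    a J z = -(a (J ∘ Equiv.swap ⟨m, by omega⟩ ⟨m+1, hm⟩) z) := by
  have hmn : m < n := by omega
  obtain ⟨q, hq⟩ : ∃ q : Fin n, ∀ p : Fin k, p.1 < m → J p ≠ q := by
    by_contra hcon
    push_neg at hcon
    have hsub : (Finset.univ : Finset (Fin n))
        ⊆ Finset.image (fun i : Fin m => J ⟨i.1, by omega⟩) Finset.univ := by
      intro x _
      obtain ⟨p, hp1, hp2⟩ := hcon x
      refine Finset.mem_image.mpr ⟨⟨p.1, hp1⟩, Finset.mem_univ _, ?_⟩
      rw [← hp2]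
    have hc1 := Finset.card_le_card hsub
    have hc2 := Finset.card_image_le
      (f := fun i : Fin m => J ⟨i.1, by omega⟩) (s := Finset.univ)
    simp only [Finset.card_univ, Fintype.card_fin] at hc1 hc2
    omega
  have hdiff : ∀ I, DifferentiableAt ℝ (a I) z :=
    fun I => ((ha I).contDiffAt (hU.mem_nhds hz)).differentiableAt (by simp)
  have h1 : leibnizD k a (XF m q J) z = 0 :=
    hclosed _ (fun i => (XF_smooth m q J i).contDiffOn) z hz
  have h2 : leibnizD k a (XcF m q J) z = 0 :=
    hclosed _ (fun i => (XcF_smooth m q J i).contDiffOn) z hz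
  rw [leibnizD] at h1 h2
  -- evaluate the constant-field identity
  have e2a : (∑ i : Fin (k+1), (-1:ℝ)^(i:ℕ) *
      fderiv ℝ (tensorApply k a fun p => XcF m q J (i.succAbove p)) z (XcF m q J i z))
      = ∑ i : Fin (k+1), (-1:ℝ)^(i:ℕ) *
          fderiv ℝ (a (fun p => bF m q J (i.succAbove p))) z (esing (bF m q J i)) :=
    Finset.sum_congr rfl fun i _ => by rw [T1c_term m q J a z i]
  have e2b := Finset.sum_eq_zero (s := (Finset.univ : Finset (Fin (k+1))))
    (fun i _ => Finset.sum_eq_zero (s := (Finset.univ : Finset (Fin (k+1))))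
      (fun j _ => T2c_term m q J a z i j))
  rw [e2a, e2b, add_zero] at h2
  -- evaluate the mixed-field identity
  have e1a : (∑ i : Fin (k+1), (-1:ℝ)^(i:ℕ) *
      fderiv ℝ (tensorApply k a fun p => XF m q J (i.succAbove p)) z (XF m q J i z))
      = ∑ i : Fin (k+1), (-1:ℝ)^(i:ℕ) *
          (z q * fderiv ℝ (a (fun p => bF m q J (i.succAbove p))) z (esing (bF m q J i))
            + (if i = (⟨m+2, Nat.succ_lt_succ hm⟩ : Fin (k+1)) then 0
               else dl m q J i * a (fun p => bF m q J (i.succAbove p)) z)) :=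
    Finset.sum_congr rfl fun i _ => by rw [T1X_term m q J hm a z hdiff i]
  have e1b : (∑ i : Fin (k+1), ∑ j : Fin (k+1),
      if h : i < j then
        (-1 : ℝ)^(j : ℕ) *
          tensorApply k a
            (Function.update (fun p => XF m q J (j.succAbove p))
              ⟨i.1, Nat.lt_of_lt_of_le (Fin.lt_def.mp h) (Nat.lt_succ_iff.mp j.isLt)⟩
              (vfBracket (XF m q J i) (XF m q J j))) z
      else 0)
      = ∑ i : Fin (k+1), ∑ j : Fin (k+1), T2fF m q J hm a z i j :=
    Finset.sum_congr rfl fun i _ => Finset.sum_congr rfl fun j _ => by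
      rw [T2X_term m q J hm a z i j]; rfl
  rw [e1a, e1b] at h1
  have e1c : (∑ i : Fin (k+1), ∑ j : Fin (k+1), T2fF m q J hm a z i j)
      = (∑ j : Fin (k+1), hhF m q J hm a z j) + ∑ i : Fin (k+1), vvF m q J hm a z i := by
    rw [Finset.sum_congr rfl fun i _ => innerSumT2 m q J hm a z i]
    rw [Finset.sum_update_of_mem (Finset.mem_univ _)]
    congr 1
    have hv0 : vvF m q J hm a z (⟨m+2, Nat.succ_lt_succ hm⟩ : Fin (k+1)) = 0 := by
      rw [vvF, if_neg (lt_irrefl _)]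
    rw [show (Finset.univ : Finset (Fin (k+1))) \ {(⟨m+2, Nat.succ_lt_succ hm⟩ : Fin (k+1))}
        = Finset.univ.erase (⟨m+2, Nat.succ_lt_succ hm⟩ : Fin (k+1)) from
      (Finset.erase_eq _ _).symm]
    exact Finset.sum_erase _ hv0
  rw [e1c] at h1
  -- combine into the key identity
  have key : ∑ i : Fin (k+1),
      (uuF m q J hm a z i + vvF m q J hm a z i + hhF m q J hm a z i) = 0 := by
    have expand : ∀ i : Fin (k+1),
        uuF m q J hm a z i + vvF m q J hm a z i + hhF m q J hm a z i
        = ((-1:ℝ)^(i:ℕ) *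
            (z q * fderiv ℝ (a (fun p => bF m q J (i.succAbove p))) z (esing (bF m q J i))
              + (if i = (⟨m+2, Nat.succ_lt_succ hm⟩ : Fin (k+1)) then 0
                 else dl m q J i * a (fun p => bF m q J (i.succAbove p)) z))
            + vvF m q J hm a z i + hhF m q J hm a z i)
          - z q * ((-1:ℝ)^(i:ℕ) *
              fderiv ℝ (a (fun p => bF m q J (i.succAbove p))) z (esing (bF m q J i))) := by
      intro i
      rw [uuF]
      ring
    rw [Finset.sum_congr rfl fun i _ => expand i, Finset.sum_sub_distrib, ← Finset.mul_sum,
      h2, mul_zero, sub_zero, Finset.sum_add_distrib, Finset.sum_add_distrib]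
    linarith [h1]
  rw [Finset.sum_eq_single (⟨m, by omega⟩ : Fin (k+1))
      (fun i _ hi => FF_vanish m q J hm a z hq i hi)
      (fun h => absurd (Finset.mem_univ _) h),
    FF_at_m m q J hm a z] at key
  have hne : ((-1:ℝ)^m) ≠ 0 := pow_ne_zero _ (by norm_num)
  have hz0 : a J z + a (J ∘ Equiv.swap ⟨m, by omega⟩ ⟨m+1, hm⟩) z = 0 :=
    by
      rcases mul_eq_zero.mp key with h | h
      · exact absurd h hne
      · exact h
  linarith [hz0]


/-- a smooth `k`-tensor (`2 ≤ k ≤ n+1`) on `U` whose Leibniz coboundary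
vanishes on all smooth vector fields is a `k`-form: its coefficients change sign under
any transposition of two entries of the multi-index. -/
theorem leibnizD_k_tensor_cocycle_alternating (n k : ℕ) (hn : 1 ≤ n)
    (hk2 : 2 ≤ k) (hkn : k ≤ n + 1)
    (U : Set (Fin n → ℝ)) (hU : IsOpen U) (hUne : U.Nonempty)
    (a : (Fin k → Fin n) → (Fin n → ℝ) → ℝ)
    (ha : ∀ I, ContDiffOn ℝ (⊤ : ℕ∞) (a I) U)
    (hclosed : ∀ X : Fin (k+1) → (Fin n → ℝ) → (Fin n → ℝ),
      (∀ i, ContDiffOn ℝ (⊤ : ℕ∞) (X i) U) → ∀ z ∈ U, leibnizD k a X z = 0) :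
    ∀ (I : Fin k → Fin n) (s t : Fin k), s ≠ t →
      ∀ z ∈ U, a I z = -(a (I ∘ Equiv.swap s t) z) := by
  have adj : ∀ (J : Fin k → Fin n) (m : ℕ) (hm' : m + 1 < k) (z : Fin n → ℝ), z ∈ U →
      a J z = -(a (J ∘ Equiv.swap ⟨m, by omega⟩ ⟨m+1, hm'⟩) z) :=
    fun J m hm' z hz => adjacent U hU a ha hclosed hkn J m hm' z hz
  have main : ∀ d : ℕ, ∀ s t : Fin k, s.1 < t.1 → t.1 - s.1 ≤ d →
      ∀ (J : Fin k → Fin n) (z : Fin n → ℝ), z ∈ U →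
        a J z = -(a (J ∘ Equiv.swap s t) z) := by
    intro d
    induction d with
    | zero => intro s t hst hle; omega
    | succ d ih =>
      intro s t hst hle J z hz
      by_cases hadj : t.1 = s.1 + 1
      · have hm' : s.1 + 1 < k := by have := t.isLt; omega
        have ht : t = ⟨s.1 + 1, hm'⟩ := Fin.ext hadj
        rw [ht]
        exact adj J s.1 hm' z hz
      · have hlt : s.1 + 1 < t.1 := by omega
        have hs1k : s.1 + 1 < k := by have := t.isLt; omega
        obtain ⟨s', hs'⟩ : ∃ s' : Fin k, s' = ⟨s.1 + 1, hs1k⟩ := ⟨_, rfl⟩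
        have hs'v : s'.1 = s.1 + 1 := by rw [hs']
        have h1 : ∀ J' : Fin k → Fin n, a J' z = -(a (J' ∘ Equiv.swap s' t) z) :=
          fun J' => ih s' t (by omega) (by omega) J' z hz
        have h2 : ∀ J' : Fin k → Fin n, a J' z = -(a (J' ∘ Equiv.swap s s') z) := by
          intro J'
          have := adj J' s.1 hs1k z hz
          rw [show (⟨s.1, by omega⟩ : Fin k) = s from Fin.ext rfl, ← hs'] at this
          exact this
        have hss' : s ≠ s' := fun h => absurd (congrArg Fin.val h) (by omega)
        have hst' : s ≠ t := fun h => absurd (congrArg Fin.val h) (by omega)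
        have hs't : s' ≠ t := fun h => absurd (congrArg Fin.val h) (by omega)
        have hcomp : J ∘ Equiv.swap s t
            = (((J ∘ Equiv.swap s' t) ∘ Equiv.swap s s') ∘ Equiv.swap s' t) := by
          funext x
          simp only [Function.comp_apply]
          congr 1
          rcases eq_or_ne x s with rfl | hx1
          · rw [Equiv.swap_apply_left,
              Equiv.swap_apply_of_ne_of_ne hss' hst',
              Equiv.swap_apply_left, Equiv.swap_apply_left]
          rcases eq_or_ne x s' with rfl | hx2
          · rw [Equiv.swap_apply_of_ne_of_ne (Ne.symm hss') hs't,
              Equiv.swap_apply_left,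
              Equiv.swap_apply_of_ne_of_ne (Ne.symm hst') (Ne.symm hs't),
              Equiv.swap_apply_right]
          rcases eq_or_ne x t with rfl | hx3
          · rw [Equiv.swap_apply_right, Equiv.swap_apply_right,
              Equiv.swap_apply_right, Equiv.swap_apply_of_ne_of_ne hss' hst']
          · rw [Equiv.swap_apply_of_ne_of_ne hx1 hx3,
              Equiv.swap_apply_of_ne_of_ne hx2 hx3,
              Equiv.swap_apply_of_ne_of_ne hx1 hx2,
              Equiv.swap_apply_of_ne_of_ne hx2 hx3]
        have e1 := h1 J
        have e2 := h2 (J ∘ Equiv.swap s' t)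
        have e3 := h1 ((J ∘ Equiv.swap s' t) ∘ Equiv.swap s s')
        rw [hcomp]
        linarith [e1, e2, e3]
  intro I s t hst z hz
  rcases lt_trichotomy s.1 t.1 with h | h | h
  · exact main (t.1 - s.1) s t h le_rfl I z hz
  · exact absurd (Fin.ext h) hst
  · rw [Equiv.swap_comm]
    exact main (s.1 - t.1) t s h le_rfl I z hz
end
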